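/- Let θ ∈ ℝ^d with ‖θ‖₀ ≤ s, let g ∈ ℝ^d, let η > 0, and let θ' = H_s(θ − η g). Then ⟨g, θ' − θ⟩ ≤ −(η/2) ‖g|_{supp(θ') ∪ supp(θ)}‖². -/

import Mathlib

open scoped BigOperators RealInnerProductSpace

open Classical in
noncomputable def supp {d : ℕ} (x : EuclideanSpace ℝ (Fin d)) : Finset (Fin d) :=
  Finset.univ.filter fun j => x j ≠ 0

noncomputable def norm0 {d : ℕ} (x : EuclideanSpace ℝ (Fin d)) : ℕ := (supp x).card

noncomputable def restrict {d : ℕ} (x : EuclideanSpace ℝ (Fin d)) (S : Finset (Fin d)) :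
    EuclideanSpace ℝ (Fin d) := WithLp.toLp 2 (fun j => if j ∈ S then x j else 0)

/-- `w` is a hard thresholding of `v` at sparsity level `s`:
`w ∈ argmin {‖u − v‖ : ‖u‖₀ ≤ s}`. -/
def IsHardThreshold {d : ℕ} (s : ℕ) (v w : EuclideanSpace ℝ (Fin d)) : Prop :=
  norm0 w ≤ s ∧ ∀ u : EuclideanSpace ℝ (Fin d), norm0 u ≤ s → ‖w - v‖ ≤ ‖u - v‖

/-!
Write `v = θ - η • g`, `T = supp θ'` and `A = supp θ \ T`. Minimality of `θ'` forces `θ' = v` on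
`T`, so `⟪g, θ' - θ⟫ = -η ‖g|_T‖² - ⟪g|_A, θ⟫`. Moreover `v|_T` carries at least as much mass as
`v` on any other set of at most `s` coordinates; exchanging the coordinates of `A` for some of
`T \ supp θ`, where `v = -η g`, gives `‖v|_A‖² ≤ η² ‖g|_T‖²`. Expanding `‖θ|_A - η g|_A‖²` turns
this into the bound `2 ⟪g|_A, θ⟫ ≥ η (‖g|_A‖² - ‖g|_T‖²)` on the cross term.
-/

open Finset hiding restrict

/-- Drop from `T` as many elements of `T \ S` as possible, up to `#(S \ T)`. -/
lemma Finset.exists_subset_sdiff_card_sdiff_union_le {α : Type*} [DecidableEq α]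
    {T S : Finset α} {s : ℕ} (hT : #T ≤ s) (hS : #S ≤ s) :
    ∃ C ⊆ T \ S, #((T \ C) ∪ (S \ T)) ≤ s := by
  obtain ⟨C, hC, hCcard⟩ := exists_subset_card_eq (min_le_right #(S \ T) #(T \ S))
  refine ⟨C, hC, (card_union_le _ _).trans ?_⟩
  have hCT : C ⊆ T := hC.trans sdiff_subset
  have h1 := card_sdiff_of_subset hCT
  have h2 := card_le_card hCT
  have h3 := card_sdiff_add_card_inter S T
  have h4 := card_sdiff_add_card_inter T S
  rw [inter_comm] at h4
  omega

section Sparse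

variable {d : ℕ}

lemma apply_eq_zero_of_notMem_supp {x : EuclideanSpace ℝ (Fin d)} {j : Fin d}
    (hj : j ∉ supp x) : x j = 0 := by
  simpa [supp] using hj

lemma norm0_restrict_le (x : EuclideanSpace ℝ (Fin d)) (S : Finset (Fin d)) :
    norm0 (restrict x S) ≤ #S :=
  card_le_card fun j hj => by
    by_contra hjS
    simp [supp, restrict, hjS] at hj

lemma norm_sq_eq_sum_sq (x : EuclideanSpace ℝ (Fin d)) : ‖x‖ ^ 2 = ∑ j, x j ^ 2 := by
  simp [EuclideanSpace.norm_sq_eq]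

lemma norm_restrict_sq (x : EuclideanSpace ℝ (Fin d)) (S : Finset (Fin d)) :
    ‖restrict x S‖ ^ 2 = ∑ j ∈ S, x j ^ 2 := by
  simp [norm_sq_eq_sum_sq, restrict, ite_pow, sum_ite_mem]

lemma restrict_sub_self (x : EuclideanSpace ℝ (Fin d)) (S : Finset (Fin d)) :
    restrict x S - x = -restrict x Sᶜ := by
  ext j
  by_cases hj : j ∈ S <;> simp [restrict, hj]

lemma norm_sub_sq_eq (w v : EuclideanSpace ℝ (Fin d)) :
    ‖w - v‖ ^ 2 = ∑ j ∈ supp w, (w j - v j) ^ 2 + ∑ j ∈ (supp w)ᶜ, v j ^ 2 := by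
  rw [norm_sq_eq_sum_sq, ← sum_add_sum_compl (supp w)]
  congr 1
  exact sum_congr rfl fun j hj => by simp [apply_eq_zero_of_notMem_supp (mem_compl.1 hj)]

lemma inner_sub_eq_sum_supp_union (g x y : EuclideanSpace ℝ (Fin d)) :
    ⟪g, x - y⟫ = ∑ j ∈ supp x ∪ supp y, g j * (x j - y j) := by
  rw [sum_subset (subset_univ _) fun j _ hj => ?_]
  · simp [PiLp.inner_apply, mul_comm]
  · rw [mem_union, not_or] at hj
    simp [apply_eq_zero_of_notMem_supp hj.1, apply_eq_zero_of_notMem_supp hj.2]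

end Sparse

namespace IsHardThreshold

variable {d s : ℕ} {v w : EuclideanSpace ℝ (Fin d)}

/-- Minimality of `w` against the competitor `restrict v W`. -/
lemma sum_sq_sub_add_sum_sq_le (h : IsHardThreshold s v w) {W : Finset (Fin d)}
    (hW : #W ≤ s) :
    ∑ j ∈ supp w, (w j - v j) ^ 2 + ∑ j ∈ W, v j ^ 2 ≤ ∑ j ∈ supp w, v j ^ 2 := by
  have hmin : ‖w - v‖ ^ 2 ≤ ‖restrict v W - v‖ ^ 2 :=
    pow_le_pow_left₀ (norm_nonneg _) (h.2 _ ((norm0_restrict_le v W).trans hW)) 2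
  rw [norm_sub_sq_eq, restrict_sub_self, norm_neg, norm_restrict_sq] at hmin
  have hw := sum_add_sum_compl (supp w) fun j => v j ^ 2
  have hW := sum_add_sum_compl W fun j => v j ^ 2
  linarith

lemma apply_eq_of_mem_supp (h : IsHardThreshold s v w) {j : Fin d} (hj : j ∈ supp w) :
    w j = v j := by
  have hle := h.sum_sq_sub_add_sum_sq_le h.1
  have hzero : ∑ k ∈ supp w, (w k - v k) ^ 2 = 0 :=
    le_antisymm (by linarith) (sum_nonneg fun _ _ => sq_nonneg _)
  have hj0 := (sum_eq_zero_iff_of_nonneg fun _ _ => sq_nonneg _).1 hzero j hj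
  exact sub_eq_zero.1 (pow_eq_zero_iff two_ne_zero |>.1 hj0)

lemma sum_sq_le_of_card_le (h : IsHardThreshold s v w) {W : Finset (Fin d)} (hW : #W ≤ s) :
    ∑ j ∈ W, v j ^ 2 ≤ ∑ j ∈ supp w, v j ^ 2 := by
  have hle := h.sum_sq_sub_add_sum_sq_le hW
  have hnonneg : 0 ≤ ∑ j ∈ supp w, (w j - v j) ^ 2 := sum_nonneg fun _ _ => sq_nonneg _
  linarith

lemma sum_sq_sdiff_supp_le (h : IsHardThreshold s v w) {S : Finset (Fin d)} (hS : #S ≤ s) :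
    ∑ j ∈ S \ supp w, v j ^ 2 ≤ ∑ j ∈ supp w \ S, v j ^ 2 := by
  obtain ⟨C, hC, hcard⟩ := exists_subset_sdiff_card_sdiff_union_le h.1 hS
  have hle := h.sum_sq_le_of_card_le hcard
  rw [sum_union (disjoint_sdiff.mono_left sdiff_subset),
    ← sum_sdiff (hC.trans sdiff_subset)] at hle
  have hCle : ∑ j ∈ C, v j ^ 2 ≤ ∑ j ∈ supp w \ S, v j ^ 2 :=
    sum_le_sum_of_subset_of_nonneg hC fun _ _ _ => sq_nonneg _
  linarith

lemma sum_sq_sdiff_supp_le_of_grad_step {θ g θ' : EuclideanSpace ℝ (Fin d)} {η : ℝ}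
    (h : IsHardThreshold s (θ - η • g) θ') (hθ : norm0 θ ≤ s) :
    ∑ j ∈ supp θ \ supp θ', (θ j - η * g j) ^ 2 ≤ η ^ 2 * ∑ j ∈ supp θ', g j ^ 2 := by
  have hv : ∀ j, (θ - η • g) j = θ j - η * g j := fun j => by simp
  calc ∑ j ∈ supp θ \ supp θ', (θ j - η * g j) ^ 2
      ≤ ∑ j ∈ supp θ' \ supp θ, (θ j - η * g j) ^ 2 := by
        simpa only [hv] using h.sum_sq_sdiff_supp_le hθ
    _ = η ^ 2 * ∑ j ∈ supp θ' \ supp θ, g j ^ 2 := by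
        rw [mul_sum]
        refine sum_congr rfl fun j hj => ?_
        rw [apply_eq_zero_of_notMem_supp (mem_sdiff.1 hj).2]
        ring
    _ ≤ η ^ 2 * ∑ j ∈ supp θ', g j ^ 2 := by
        gcongr
        exact sdiff_subset

end IsHardThreshold

/-- For `θ` with `‖θ‖₀ ≤ s`, `g ∈ ℝ^d`, `η > 0` and
`θ' = H_s(θ − η g)`, we have `⟨g, θ' − θ⟩ ≤ −(η/2) ‖g|_{supp θ' ∪ supp θ}‖²`. -/
theorem inner_grad_step_le {d s : ℕ} (θ g θ' : EuclideanSpace ℝ (Fin d)) (η : ℝ)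
    (hη : 0 < η) (hθ : norm0 θ ≤ s) (hHT : IsHardThreshold s (θ - η • g) θ') :
    ⟪g, θ' - θ⟫ ≤ -(η / 2) * ‖restrict g (supp θ' ∪ supp θ)‖ ^ 2 := by
  set T := supp θ'
  set A := supp θ \ T
  have hunion : T ∪ supp θ = T ∪ A := union_sdiff_self_eq_union.symm
  have hinner : ⟪g, θ' - θ⟫ = -η * ∑ j ∈ T, g j ^ 2 - ∑ j ∈ A, g j * θ j := by
    rw [inner_sub_eq_sum_supp_union, hunion, sum_union disjoint_sdiff, mul_sum, sub_eq_add_neg,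
      ← sum_neg_distrib]
    congr 1
    · exact sum_congr rfl fun j hj => by
        rw [hHT.apply_eq_of_mem_supp hj]
        simp only [PiLp.sub_apply, PiLp.smul_apply, smul_eq_mul]
        ring
    · exact sum_congr rfl fun j hj => by
        rw [apply_eq_zero_of_notMem_supp (mem_sdiff.1 hj).2]
        ring
  have hnorm : ‖restrict g (T ∪ supp θ)‖ ^ 2 = ∑ j ∈ T, g j ^ 2 + ∑ j ∈ A, g j ^ 2 := by
    rw [norm_restrict_sq, hunion, sum_union disjoint_sdiff]
  have hmass := hHT.sum_sq_sdiff_supp_le_of_grad_step hθ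
  have hexpand : ∑ j ∈ A, (θ j - η * g j) ^ 2
      = ∑ j ∈ A, θ j ^ 2 - 2 * η * ∑ j ∈ A, g j * θ j + η ^ 2 * ∑ j ∈ A, g j ^ 2 := by
    simp only [mul_sum, ← sum_sub_distrib, ← sum_add_distrib]
    exact sum_congr rfl fun j _ => by ring
  have hθA : 0 ≤ ∑ j ∈ A, θ j ^ 2 := sum_nonneg fun _ _ => sq_nonneg _
  have hcross : η * (∑ j ∈ A, g j ^ 2 - ∑ j ∈ T, g j ^ 2) ≤ 2 * ∑ j ∈ A, g j * θ j :=
    le_of_mul_le_mul_left (by nlinarith) hη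
  rw [hinner, hnorm]
  linarith
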